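/- arXiv:2211.10901 — 2 statements merged into one kernel-verified Lean document; each statement's English description precedes it below -/
import Mathlib

section
/- If M_λ(t) = (1 − 2cσ²t)^{−1/2}·exp(cμ²t/(1 − 2cσ²t)) with c, σ², μ² > 0, and the APEP is defined as P(ρ) = (1/12)·M_λ(−ρ/4) + (1/4)·M_λ(−ρ/3) for ρ > 0, then lim_{ρ→∞} −log P(ρ)/log ρ = 1/2. -/
open Real Filter

lemma aux_frac_lim (a : ℝ) (ha : 0 < a) :
    Tendsto (fun ρ : ℝ => ρ / (1 + a * ρ)) atTop (nhds (1 / a)) := by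
  have h1 : Tendsto (fun ρ : ℝ => 1 / ρ + a) atTop (nhds a) := by
    have := (tendsto_inv_atTop_zero (𝕜 := ℝ)).add_const a
    simpa [one_div] using this
  have h2 : Tendsto (fun ρ : ℝ => 1 / (1 / ρ + a)) atTop (nhds (1 / a)) :=
    tendsto_const_nhds.div h1 (ne_of_gt ha)
  refine h2.congr' ?_
  filter_upwards [eventually_gt_atTop (0 : ℝ)] with ρ hρ
  have hρ' : ρ ≠ 0 := ne_of_gt hρ
  have hd : (0 : ℝ) < 1 + a * ρ := by positivity
  rw [eq_div_iff (ne_of_gt hd)]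
  field_simp

lemma aux_term_lim (a b : ℝ) (ha : 0 < a) :
    Tendsto (fun ρ : ℝ => (ρ / (1 + a * ρ)) ^ ((1:ℝ)/2)
      * Real.exp (-b * (ρ / (1 + a * ρ)))) atTop
      (nhds ((1/a) ^ ((1:ℝ)/2) * Real.exp (-b * (1/a)))) := by
  have h := aux_frac_lim a ha
  exact (h.rpow_const (Or.inr (by norm_num))).mul
    ((Real.continuous_exp.tendsto _).comp (h.const_mul (-b)))

theorem diversity_order_half
    (c σ2 μ2 : ℝ) (hc : 0 < c) (hσ2 : 0 < σ2) (hμ2 : 0 < μ2)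
    (M : ℝ → ℝ)
    (hM : ∀ t : ℝ, M t = (1 - 2 * c * σ2 * t) ^ (-(1 / 2) : ℝ)
        * Real.exp (c * μ2 * t / (1 - 2 * c * σ2 * t)))
    (P : ℝ → ℝ)
    (hP : ∀ ρ : ℝ, P ρ = (1 / 12) * M (-ρ / 4) + (1 / 4) * M (-ρ / 3)) :
    Tendsto (fun ρ : ℝ => -Real.log (P ρ) / Real.log ρ) atTop (nhds (1 / 2)) := by
  set a1 : ℝ := c * σ2 / 2 with ha1def
  set a2 : ℝ := 2 * c * σ2 / 3 with ha2def
  set b1 : ℝ := c * μ2 / 4 with hb1def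
  set b2 : ℝ := c * μ2 / 3 with hb2def
  have ha1 : 0 < a1 := by positivity
  have ha2 : 0 < a2 := by positivity
  set L : ℝ := (1/12) * ((1/a1) ^ ((1:ℝ)/2) * Real.exp (-b1 * (1/a1)))
      + (1/4) * ((1/a2) ^ ((1:ℝ)/2) * Real.exp (-b2 * (1/a2))) with hLdef
  have hL : 0 < L := by
    have h1 : (0:ℝ) < (1/a1) ^ ((1:ℝ)/2) := Real.rpow_pos_of_pos (by positivity) _
    have h2 : (0:ℝ) < (1/a2) ^ ((1:ℝ)/2) := Real.rpow_pos_of_pos (by positivity) _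
    have e1 := Real.exp_pos (-b1 * (1/a1))
    have e2 := Real.exp_pos (-b2 * (1/a2))
    positivity
  -- Q ρ := P ρ * ρ^{1/2} tends to L
  have hQ : Tendsto (fun ρ : ℝ => P ρ * ρ ^ ((1:ℝ)/2)) atTop (nhds L) := by
    have hlim : Tendsto (fun ρ : ℝ =>
        (1/12) * ((ρ / (1 + a1 * ρ)) ^ ((1:ℝ)/2) * Real.exp (-b1 * (ρ / (1 + a1 * ρ))))
        + (1/4) * ((ρ / (1 + a2 * ρ)) ^ ((1:ℝ)/2) * Real.exp (-b2 * (ρ / (1 + a2 * ρ)))))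
        atTop (nhds L) := by
      exact ((aux_term_lim a1 b1 ha1).const_mul (1/12)).add
        ((aux_term_lim a2 b2 ha2).const_mul (1/4))
    refine hlim.congr' ?_
    filter_upwards [eventually_gt_atTop (0 : ℝ)] with ρ hρ
    have hd1 : (0:ℝ) < 1 + a1 * ρ := by positivity
    have hd2 : (0:ℝ) < 1 + a2 * ρ := by positivity
    have key1 : (1 : ℝ) - 2 * c * σ2 * (-ρ / 4) = 1 + a1 * ρ := by
      rw [ha1def]; ring
    have key2 : (1 : ℝ) - 2 * c * σ2 * (-ρ / 3) = 1 + a2 * ρ := by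
      rw [ha2def]; ring
    have hr1 : (ρ / (1 + a1 * ρ)) ^ ((1:ℝ)/2)
        = ρ ^ ((1:ℝ)/2) * (1 + a1 * ρ) ^ (-(1/2) : ℝ) := by
      rw [Real.div_rpow hρ.le hd1.le, Real.rpow_neg hd1.le, div_eq_mul_inv]
    have hr2 : (ρ / (1 + a2 * ρ)) ^ ((1:ℝ)/2)
        = ρ ^ ((1:ℝ)/2) * (1 + a2 * ρ) ^ (-(1/2) : ℝ) := by
      rw [Real.div_rpow hρ.le hd2.le, Real.rpow_neg hd2.le, div_eq_mul_inv]
    have he1 : c * μ2 * (-ρ / 4) / (1 + a1 * ρ) = -b1 * (ρ / (1 + a1 * ρ)) := by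
      rw [hb1def]; field_simp
    have he2 : c * μ2 * (-ρ / 3) / (1 + a2 * ρ) = -b2 * (ρ / (1 + a2 * ρ)) := by
      rw [hb2def]; field_simp
    rw [hP, hM, hM, key1, key2, he1, he2, hr1, hr2]
    ring
  -- derive the final limit
  have hlogQ : Tendsto (fun ρ : ℝ => Real.log (P ρ * ρ ^ ((1:ℝ)/2))) atTop
      (nhds (Real.log L)) :=
    ((Real.continuousAt_log (ne_of_gt hL)).tendsto).comp hQ
  have hratio : Tendsto (fun ρ : ℝ =>
      Real.log (P ρ * ρ ^ ((1:ℝ)/2)) / Real.log ρ) atTop (nhds 0) :=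
    hlogQ.div_atTop Real.tendsto_log_atTop
  have hfinal : Tendsto (fun ρ : ℝ =>
      1/2 - Real.log (P ρ * ρ ^ ((1:ℝ)/2)) / Real.log ρ) atTop (nhds (1/2)) := by
    simpa using (tendsto_const_nhds (x := (1/2 : ℝ)) (f := atTop)).sub hratio
  refine hfinal.congr' ?_
  filter_upwards [eventually_gt_atTop (1 : ℝ), hQ.eventually (eventually_gt_nhds hL)]
    with ρ hρ1 hQpos
  have hρ0 : (0:ℝ) < ρ := lt_trans one_pos hρ1
  have hrp : (0:ℝ) < ρ ^ ((1:ℝ)/2) := Real.rpow_pos_of_pos hρ0 _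
  have hPpos : 0 < P ρ := by
    have h := div_pos hQpos hrp
    rwa [mul_div_cancel_right₀ _ (ne_of_gt hrp)] at h
  have hlogρ : 0 < Real.log ρ := Real.log_pos hρ1
  have hlm : Real.log (P ρ * ρ ^ ((1:ℝ)/2))
      = Real.log (P ρ) + (1/2) * Real.log ρ := by
    rw [Real.log_mul (ne_of_gt hPpos) (ne_of_gt hrp), Real.log_rpow hρ0]
  rw [hlm]
  field_simp
  ring
end

section
/- If M_λ(t) = det(I − 2tC)^{−1/2}·exp(−(1/2)mᵀ[I − (I − 2tC)^{−1}]C^{−1}m) with C a 2×2 symmetric positive-definite matrix and m ∈ ℝ², and P(ρ) = (1/12)·M_λ(−ρ/4) + (1/4)·M_λ(−ρ/3) for ρ > 0, then lim_{ρ→∞} −log P(ρ)/log ρ = 1. -/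
/-!
Writing `1 + s • C = s • (s⁻¹ • 1 + C)` with `s⁻¹ • 1 + C → C` invertible gives
`det (1 + s • C) ~ s ^ 2 * det C` and `(1 + s • C)⁻¹ → 0`, so
`M (-s / 2) ~ det C ^ (-1/2) * exp (-(1/2) * mᵀ C⁻¹ m) / s`. Both terms of `P` therefore decay
like `1 / ρ`, i.e. `ρ * P ρ` has a positive finite limit `L`, and then
`-log P ρ / log ρ = 1 - log (ρ * P ρ) / log ρ → 1`.
-/

open Real Filter Matrix Topology

namespace Matrix

variable {n : Type*} [DecidableEq n]

lemma one_add_smul_eq_smul_inv_smul_one_add (C : Matrix n n ℝ) {s : ℝ} (hs : s ≠ 0) :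
    1 + s • C = s • (s⁻¹ • (1 : Matrix n n ℝ) + C) := by
  rw [smul_add, smul_smul, mul_inv_cancel₀ hs, one_smul]

lemma tendsto_inv_smul_one_add_atTop (C : Matrix n n ℝ) :
    Tendsto (fun s : ℝ => s⁻¹ • (1 : Matrix n n ℝ) + C) atTop (𝓝 C) := by
  simpa using ((tendsto_inv_atTop_zero (𝕜 := ℝ)).smul_const (1 : Matrix n n ℝ)).add_const C

variable [Fintype n]

lemma tendsto_det_one_add_smul_div_pow_atTop (C : Matrix n n ℝ) :
    Tendsto (fun s : ℝ => (1 + s • C).det / s ^ Fintype.card n) atTop (𝓝 C.det) := by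
  refine ((continuous_id.matrix_det).tendsto C |>.comp (tendsto_inv_smul_one_add_atTop C)).congr' ?_
  filter_upwards [eventually_ne_atTop 0] with s hs
  rw [Function.comp_apply, id, one_add_smul_eq_smul_inv_smul_one_add C hs, det_smul,
    mul_div_cancel_left₀ _ (pow_ne_zero _ hs)]

lemma tendsto_inv_one_add_smul_atTop {C : Matrix n n ℝ} (hC : IsUnit C.det) :
    Tendsto (fun s : ℝ => (1 + s • C)⁻¹) atTop (𝓝 0) := by
  have hlim := tendsto_inv_smul_one_add_atTop C
  have hinv : Tendsto (fun s : ℝ => (s⁻¹ • (1 : Matrix n n ℝ) + C)⁻¹) atTop (𝓝 C⁻¹) := by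
    refine (continuousAt_matrix_inv C ?_).tendsto.comp hlim
    rw [Ring.inverse_eq_inv']
    exact continuousAt_inv₀ hC.ne_zero
  have hunit : ∀ᶠ s : ℝ in atTop, IsUnit (s⁻¹ • (1 : Matrix n n ℝ) + C).det :=
    ((continuous_id.matrix_det).tendsto C |>.comp hlim).eventually_ne hC.ne_zero
      |>.mono fun _ => Ne.isUnit
  simpa using (tendsto_inv_atTop_zero.smul hinv).congr' <| by
    filter_upwards [hunit, eventually_ne_atTop 0] with s hdet hs
    rw [one_add_smul_eq_smul_inv_smul_one_add C hs]
    exact (inv_smul' _ (Units.mk0 s hs) hdet).symm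

lemma PosDef.det_one_add_smul_pos {C : Matrix n n ℝ} (hC : C.PosDef) {s : ℝ} (hs : 0 ≤ s) :
    0 < (1 + s • C).det :=
  (PosDef.one.add_posSemidef (hC.posSemidef.smul hs)).det_pos

lemma PosDef.tendsto_rpow_mul_det_one_add_smul_rpow {C : Matrix n n ℝ} (hC : C.PosDef) :
    Tendsto (fun s : ℝ => s ^ ((Fintype.card n : ℝ) / 2) * (1 + s • C).det ^ (-(1 / 2) : ℝ))
      atTop (𝓝 (C.det ^ (-(1 / 2) : ℝ))) := by
  refine ((tendsto_det_one_add_smul_div_pow_atTop C).rpow_const (Or.inl hC.det_pos.ne')).congr' ?_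
  filter_upwards [eventually_gt_atTop 0] with s hs
  rw [div_rpow (hC.det_one_add_smul_pos hs.le).le (by positivity), ← rpow_natCast_mul hs.le,
    show (Fintype.card n : ℝ) * -(1 / 2) = -((Fintype.card n : ℝ) / 2) by ring, rpow_neg hs.le,
    div_inv_eq_mul, mul_comm]

end Matrix

/-- The closed form of the moment generating function `M_λ` of the paper. -/
noncomputable def quadFormMGF {n : Type*} [Fintype n] [DecidableEq n]
    (C : Matrix n n ℝ) (m : n → ℝ) (t : ℝ) : ℝ :=
  (1 - (2 * t) • C).det ^ (-(1 / 2) : ℝ)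
    * Real.exp (-(1 / 2) * (m ⬝ᵥ ((1 - (1 - (2 * t) • C)⁻¹) *ᵥ (C⁻¹ *ᵥ m))))

lemma Matrix.PosDef.tendsto_rpow_mul_quadFormMGF {n : Type*} [Fintype n] [DecidableEq n]
    {C : Matrix n n ℝ} (hC : C.PosDef) (m : n → ℝ) :
    Tendsto (fun s : ℝ => s ^ ((Fintype.card n : ℝ) / 2) * quadFormMGF C m (-s / 2)) atTop
      (𝓝 (C.det ^ (-(1 / 2) : ℝ) * Real.exp (-(1 / 2) * (m ⬝ᵥ (C⁻¹ *ᵥ m))))) := by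
  have hdot : Tendsto (fun s : ℝ => m ⬝ᵥ ((1 - (1 + s • C)⁻¹) *ᵥ (C⁻¹ *ᵥ m))) atTop
      (𝓝 (m ⬝ᵥ (C⁻¹ *ᵥ m))) := by
    have hcont : Continuous fun A : Matrix n n ℝ => m ⬝ᵥ (A *ᵥ (C⁻¹ *ᵥ m)) :=
      continuous_const.dotProduct (continuous_id.matrix_mulVec continuous_const)
    have hsub : Tendsto (fun s : ℝ => 1 - (1 + s • C)⁻¹) atTop (𝓝 1) := by
      simpa using tendsto_const_nhds.sub (tendsto_inv_one_add_smul_atTop hC.det_pos.ne'.isUnit)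
    simpa only [one_mulVec, Function.comp_def] using (hcont.tendsto 1).comp hsub
  refine (hC.tendsto_rpow_mul_det_one_add_smul_rpow.mul
    ((continuous_exp.tendsto _).comp (hdot.const_mul _))).congr fun s => ?_
  have hmat : (1 : Matrix n n ℝ) - (2 * (-s / 2)) • C = 1 + s • C := by
    rw [show 2 * (-s / 2) = -s by ring, neg_smul, sub_neg_eq_add]
  simp only [quadFormMGF, hmat, Function.comp_apply]
  ring

lemma tendsto_rpow_mul_comp_const_mul {f : ℝ → ℝ} {d L c : ℝ} (hc : 0 < c)
    (h : Tendsto (fun s => s ^ d * f s) atTop (𝓝 L)) :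
    Tendsto (fun ρ => ρ ^ d * f (c * ρ)) atTop (𝓝 (c ^ (-d) * L)) := by
  refine ((h.comp (tendsto_id.const_mul_atTop hc)).const_mul (c ^ (-d))).congr' ?_
  filter_upwards [eventually_gt_atTop 0] with ρ hρ
  rw [Function.comp_apply, id, mul_rpow hc.le hρ.le, ← mul_assoc, ← mul_assoc,
    ← rpow_add hc, neg_add_cancel, rpow_zero, one_mul]

lemma tendsto_neg_log_div_log_of_tendsto_rpow_mul {P : ℝ → ℝ} {d L : ℝ} (hL : 0 < L)
    (h : Tendsto (fun ρ => ρ ^ d * P ρ) atTop (𝓝 L)) :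
    Tendsto (fun ρ => -Real.log (P ρ) / Real.log ρ) atTop (𝓝 d) := by
  have hlog : Tendsto (fun ρ => Real.log (ρ ^ d * P ρ) / Real.log ρ) atTop (𝓝 0) :=
    ((continuousAt_log hL.ne').tendsto.comp h).div_atTop tendsto_log_atTop
  simpa using (hlog.const_sub d).congr' <| by
    filter_upwards [eventually_gt_atTop 1, h.eventually (eventually_gt_nhds hL)] with ρ hρ hpos
    have hρd : 0 < ρ ^ d := rpow_pos_of_pos (by linarith) d
    have hlogρ : 0 < Real.log ρ := log_pos hρ
    rw [log_mul hρd.ne' (pos_of_mul_pos_right hpos hρd.le).ne', log_rpow (by linarith)]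
    field_simp
    ring

theorem diversity_order_one_general
    (C : Matrix (Fin 2) (Fin 2) ℝ) (hCpd : C.PosDef)
    (m : Fin 2 → ℝ)
    (M : ℝ → ℝ)
    (hM : ∀ t : ℝ, M t = (1 - (2 * t) • C).det ^ (-(1 / 2) : ℝ)
        * Real.exp (-(1 / 2) * (m ⬝ᵥ ((1 - (1 - (2 * t) • C)⁻¹) *ᵥ (C⁻¹ *ᵥ m)))))
    (P : ℝ → ℝ)
    (hP : ∀ ρ : ℝ, P ρ = (1 / 12) * M (-ρ / 4) + (1 / 4) * M (-ρ / 3)) :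
    Tendsto (fun ρ : ℝ => -Real.log (P ρ) / Real.log ρ) atTop (nhds 1) := by
  obtain rfl : M = quadFormMGF C m := funext hM
  have hM_asymp := hCpd.tendsto_rpow_mul_quadFormMGF m
  rw [Fintype.card_fin, Nat.cast_ofNat, div_self two_ne_zero] at hM_asymp
  have hP_asymp := ((tendsto_rpow_mul_comp_const_mul (c := 1 / 2) (by norm_num) hM_asymp).const_mul
    (1 / 12)).add ((tendsto_rpow_mul_comp_const_mul (c := 2 / 3) (by norm_num) hM_asymp).const_mul
    (1 / 4))
  have hdet := hCpd.det_pos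
  refine tendsto_neg_log_div_log_of_tendsto_rpow_mul (by positivity) (hP_asymp.congr fun ρ => ?_)
  rw [hP]
  ring_nf

theorem diversity_order_one
    (C : Matrix (Fin 2) (Fin 2) ℝ) (hCsymm : C.IsSymm) (hCpd : C.PosDef)
    (m : Fin 2 → ℝ)
    (M : ℝ → ℝ)
    (hM : ∀ t : ℝ, M t = (1 - (2 * t) • C).det ^ (-(1 / 2) : ℝ)
        * Real.exp (-(1 / 2) * (m ⬝ᵥ ((1 - (1 - (2 * t) • C)⁻¹) *ᵥ (C⁻¹ *ᵥ m)))))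
    (P : ℝ → ℝ)
    (hP : ∀ ρ : ℝ, P ρ = (1 / 12) * M (-ρ / 4) + (1 / 4) * M (-ρ / 3)) :
    Tendsto (fun ρ : ℝ => -Real.log (P ρ) / Real.log ρ) atTop (nhds 1) :=
  diversity_order_one_general C hCpd m M hM P hP
end
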